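/- arXiv:1712.04756 — 2 statements merged into one kernel-verified Lean document; each statement's English description precedes it below -/
import Mathlib

section
/- There exists an absolute constant C > 0 such that the following holds. Let ξ be a random variable on a probability space (Ω, 𝓕, P) with E[ξ²] < ∞, let 𝓖 ⊆ 𝓕 be a sub-σ-algebra with E[ξ | 𝓖] = 0 almost surely, and for λ > 0 set ζ = λξ − λ²ξ²/2 and ẽ_λ = λ² E[ξ² 1{|λξ| > 1} | 𝓖] + λ³ E[|ξ|³ 1{|λξ| ≤ 1} | 𝓖]. Then for all λ > 0, almost surely: (i) | E[e^ζ | 𝓖] − 1 | ≤ C ẽ_λ; (ii) | E[ζ e^ζ | 𝓖] − (λ²/2) E[ξ² | 𝓖] | ≤ C ẽ_λ; (iii) | E[ζ² e^ζ | 𝓖] − λ² E[ξ² | 𝓖] | ≤ C ẽ_λ; (iv) E[|ζ|³ e^ζ | 𝓖] ≤ C ẽ_λ; (v) ( E[ζ e^ζ | 𝓖] )² ≤ C ẽ_λ. -/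
/-
Write `x = λξ` and let `g x` (`cubeOrSquare x`) be `x ^ 2` for `|x| > 1` and `|x| ^ 3` for
`|x| ≤ 1`, so that `ẽ_λ = E[g (λξ) | 𝓖]`. Since `ζ = x - x ^ 2 / 2 ≤ 1 / 2`, each `|ζ| ^ n e^ζ` is bounded, which
handles `|x| > 1`; for `|x| ≤ 1` a third-order Taylor expansion of `e^ζ` gives
`e^ζ = 1 + x + O(|x| ^ 3)`. Together these bound `|e^ζ - 1 - x|`, `|ζ e^ζ - x - x ^ 2 / 2|`,
`|ζ ^ 2 e^ζ - x ^ 2|` and `|ζ| ^ 3 e^ζ` by a multiple of `g x` pointwise, and (i)–(iv) follow by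
taking conditional expectations, the linear terms vanishing because `E[ξ | 𝓖] = 0`.
For (v), `E[ζ e^ζ | 𝓖] = E[ζ e^ζ - x | 𝓖]`, whose square is at most `E[(ζ e^ζ - x) ^ 2 | 𝓖]` by
conditional Jensen, and `(ζ e^ζ - x) ^ 2` is again a multiple of `g x` pointwise.
-/

open MeasureTheory Filter
open scoped Topology ENNReal

/-- `ζ = λξ − λ²ξ²/2`. -/
noncomputable def zetaOf {Ω : Type} (lam : ℝ) (ξ : Ω → ℝ) : Ω → ℝ :=
  fun ω => lam * ξ ω - lam ^ 2 * (ξ ω) ^ 2 / 2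

/-- `ẽ_λ = λ² E[ξ² 1{|λξ| > 1} | 𝓖] + λ³ E[|ξ|³ 1{|λξ| ≤ 1} | 𝓖]`,
where `𝓖 = mG` is a sub-σ-algebra. -/
noncomputable def tildeEps {Ω : Type} (mG : MeasurableSpace Ω) [mF : MeasurableSpace Ω]
    (P : Measure Ω) (lam : ℝ) (ξ : Ω → ℝ) : Ω → ℝ :=
  fun ω =>
    lam ^ 2 * (P[fun ω' => if 1 < |lam * ξ ω'| then (ξ ω') ^ 2 else 0|mG]) ω +
      lam ^ 3 * (P[fun ω' => if |lam * ξ ω'| ≤ 1 then |ξ ω'| ^ 3 else 0|mG]) ω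

open Real

lemma exp_le_two_of_le_half {t : ℝ} (ht : t ≤ 1 / 2) : exp t ≤ 2 :=
  (exp_le_exp.2 ht).trans <| by
    have h := exp_bound_div_one_sub_of_interval (x := 1 / 2) (by norm_num) (by norm_num)
    norm_num at h ⊢
    exact h

lemma abs_pow_mul_exp_le (n : ℕ) {t : ℝ} (ht : t ≤ 1 / 2) :
    |t| ^ n * exp t ≤ 2 * n.factorial := by
  have hn : (1 : ℝ) ≤ n.factorial := mod_cast n.factorial_pos
  rcases le_or_gt t 0 with h | h
  · have hdiv := pow_div_factorial_le_exp _ (neg_nonneg.2 h) n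
    rw [div_le_iff₀ (by positivity)] at hdiv
    rw [abs_of_nonpos h]
    calc (-t) ^ n * exp t ≤ exp (-t) * n.factorial * exp t := by gcongr
      _ = n.factorial := by rw [mul_right_comm, ← exp_add, neg_add_cancel, exp_zero, one_mul]
      _ ≤ 2 * n.factorial := by linarith
  · have h1 : |t| ^ n ≤ 1 := pow_le_one₀ (abs_nonneg t) (by rw [abs_of_pos h]; linarith)
    calc |t| ^ n * exp t ≤ 1 * 2 := by gcongr; exact exp_le_two_of_le_half ht
      _ ≤ 2 * n.factorial := by linarith

lemma abs_mul_exp_le_two {t : ℝ} (ht : t ≤ 1 / 2) : |t * exp t| ≤ 2 := by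
  simpa [abs_mul, abs_of_pos (exp_pos t)] using abs_pow_mul_exp_le 1 ht

lemma abs_sq_mul_exp_le_four {t : ℝ} (ht : t ≤ 1 / 2) : |t ^ 2 * exp t| ≤ 4 := by
  have h := abs_pow_mul_exp_le 2 ht
  rw [abs_mul, abs_pow, abs_of_pos (exp_pos t)]
  norm_num [Nat.factorial] at h ⊢
  linarith

lemma abs_abs_pow_three_mul_exp_le {t : ℝ} (ht : t ≤ 1 / 2) : |(|t| ^ 3 * exp t)| ≤ 12 := by
  have h := abs_pow_mul_exp_le 3 ht
  rw [abs_mul, abs_pow, abs_abs, abs_of_pos (exp_pos t)]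
  norm_num [Nat.factorial] at h ⊢
  linarith

lemma abs_exp_sub_taylor_le {z : ℝ} (hz : |z| ≤ 2) :
    |exp z - (1 + z + z ^ 2 / 2)| ≤ |z| ^ 3 / 3 := by
  have h := Complex.exp_bound' (x := z) (n := 3) (by
    rw [Complex.norm_real, Real.norm_eq_abs]; norm_num; linarith)
  simp only [Finset.sum_range_succ, Finset.sum_range_zero, Complex.norm_real, Real.norm_eq_abs] at h
  norm_num [Nat.factorial] at h
  rw [← Complex.ofReal_exp] at h
  have : (1 + ↑z + ↑z ^ 2 / 2 : ℂ) = ((1 + z + z ^ 2 / 2 : ℝ) : ℂ) := by push_cast; ring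
  rw [this, ← Complex.ofReal_sub, Complex.norm_real, Real.norm_eq_abs] at h
  linarith

lemma sub_sq_div_two_le_half (x : ℝ) : x - x ^ 2 / 2 ≤ 1 / 2 := by
  nlinarith [sq_nonneg (x - 1)]

lemma abs_le_sq_of_one_lt_abs {x : ℝ} (hx : 1 < |x|) : |x| ≤ x ^ 2 := by
  rw [← sq_abs]; nlinarith

lemma abs_sub_sq_div_two_le {x : ℝ} (hx : |x| ≤ 1) : |x - x ^ 2 / 2| ≤ 3 / 2 * |x| := by
  rw [abs_le] at hx ⊢
  constructor <;> cases abs_cases x <;> nlinarith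

lemma abs_exp_sub_sq_div_two_sub_le {x : ℝ} (hx : |x| ≤ 1) :
    |exp (x - x ^ 2 / 2) - (1 + x)| ≤ 2 * |x| ^ 3 := by
  have hz := abs_sub_sq_div_two_le hx
  have htaylor := abs_exp_sub_taylor_le (z := x - x ^ 2 / 2) (by linarith)
  have hz3 : |x - x ^ 2 / 2| ^ 3 ≤ 27 / 8 * |x| ^ 3 := by
    calc _ ≤ (3 / 2 * |x|) ^ 3 := by gcongr
      _ = _ := by ring
  have h4 : |x| ^ 4 ≤ |x| ^ 3 := pow_le_pow_of_le_one (abs_nonneg x) hx (by norm_num)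
  calc |exp (x - x ^ 2 / 2) - (1 + x)|
      = |(exp (x - x ^ 2 / 2) - (1 + (x - x ^ 2 / 2) + (x - x ^ 2 / 2) ^ 2 / 2))
          + (-x ^ 3 / 2 + x ^ 4 / 8)| := by ring_nf
    _ ≤ |x - x ^ 2 / 2| ^ 3 / 3 + (|x| ^ 3 / 2 + |x| ^ 4 / 8) := by
        refine (abs_add_le _ _).trans (add_le_add htaylor ?_)
        refine (abs_add_le _ _).trans_eq ?_
        simp [abs_div, abs_neg, abs_pow]
    _ ≤ 2 * |x| ^ 3 := by linarith [pow_nonneg (abs_nonneg x) 3]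

/-- Written as a sum of two truncations so that `tildeEps` is, term by term, the conditional
expectation of `cubeOrSquare (λ ξ)`. -/
noncomputable def cubeOrSquare (x : ℝ) : ℝ :=
  (if 1 < |x| then x ^ 2 else 0) + (if |x| ≤ 1 then |x| ^ 3 else 0)

lemma cubeOrSquare_of_abs_le {x : ℝ} (hx : |x| ≤ 1) : cubeOrSquare x = |x| ^ 3 := by
  simp [cubeOrSquare, hx, not_lt.2 hx]

lemma cubeOrSquare_of_one_lt_abs {x : ℝ} (hx : 1 < |x|) : cubeOrSquare x = x ^ 2 := by
  simp [cubeOrSquare, hx, not_le.2 hx]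

lemma cubeOrSquare_nonneg (x : ℝ) : 0 ≤ cubeOrSquare x := by
  rcases le_or_gt |x| 1 with hx | hx
  · rw [cubeOrSquare_of_abs_le hx]; positivity
  · rw [cubeOrSquare_of_one_lt_abs hx]; positivity

lemma cubeOrSquare_le_sq (x : ℝ) : cubeOrSquare x ≤ x ^ 2 := by
  rcases le_or_gt |x| 1 with hx | hx
  · rw [cubeOrSquare_of_abs_le hx, ← sq_abs x]
    exact pow_le_pow_of_le_one (abs_nonneg x) hx (by norm_num)
  · rw [cubeOrSquare_of_one_lt_abs hx]

lemma measurable_cubeOrSquare : Measurable cubeOrSquare := by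
  refine .add (.ite (measurableSet_lt measurable_const continuous_abs.measurable) ?_ ?_)
    (.ite (measurableSet_le continuous_abs.measurable measurable_const) ?_ ?_) <;> fun_prop

lemma abs_exp_sub_le_cubeOrSquare (x : ℝ) :
    |exp (x - x ^ 2 / 2) - (1 + x)| ≤ 4 * cubeOrSquare x := by
  rcases le_or_gt |x| 1 with hx | hx
  · rw [cubeOrSquare_of_abs_le hx]
    linarith [abs_exp_sub_sq_div_two_sub_le hx, pow_nonneg (abs_nonneg x) 3]
  · rw [cubeOrSquare_of_one_lt_abs hx]
    have he := exp_le_two_of_le_half (sub_sq_div_two_le_half x)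
    have hx2 := abs_le_sq_of_one_lt_abs hx
    rw [abs_le]
    constructor <;> linarith [exp_pos (x - x ^ 2 / 2), neg_abs_le x, le_abs_self x]

lemma abs_mul_exp_sub_le_cubeOrSquare (x : ℝ) :
    |(x - x ^ 2 / 2) * exp (x - x ^ 2 / 2) - (x + x ^ 2 / 2)| ≤ 4 * cubeOrSquare x := by
  rcases le_or_gt |x| 1 with hx | hx
  · rw [cubeOrSquare_of_abs_le hx]
    have hs := abs_exp_sub_sq_div_two_sub_le hx
    have hz := abs_sub_sq_div_two_le hx
    have h4 : |x| ^ 4 ≤ |x| ^ 3 := pow_le_pow_of_le_one (abs_nonneg x) hx (by norm_num)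
    calc _ = |-x ^ 3 / 2 + (x - x ^ 2 / 2) * (exp (x - x ^ 2 / 2) - (1 + x))| := by ring_nf
      _ ≤ |x| ^ 3 / 2 + 3 / 2 * |x| * (2 * |x| ^ 3) := by
        refine (abs_add_le _ _).trans (add_le_add (by simp [abs_div, abs_pow]) ?_)
        rw [abs_mul]; gcongr
      _ ≤ 4 * |x| ^ 3 := by nlinarith [pow_nonneg (abs_nonneg x) 3]
  · rw [cubeOrSquare_of_one_lt_abs hx]
    have hb := abs_le.1 (abs_mul_exp_le_two (sub_sq_div_two_le_half x))
    have hx2 := abs_le_sq_of_one_lt_abs hx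
    rw [abs_le]
    constructor <;> nlinarith [neg_abs_le x, le_abs_self x]

lemma abs_sq_mul_exp_sub_le_cubeOrSquare (x : ℝ) :
    |(x - x ^ 2 / 2) ^ 2 * exp (x - x ^ 2 / 2) - x ^ 2| ≤ 6 * cubeOrSquare x := by
  rcases le_or_gt |x| 1 with hx | hx
  · rw [cubeOrSquare_of_abs_le hx]
    have hs := abs_exp_sub_sq_div_two_sub_le hx
    have hz : |x - x ^ 2 / 2| ^ 2 ≤ (3 / 2 * |x|) ^ 2 := by gcongr; exact abs_sub_sq_div_two_le hx
    have h4 : |x| ^ 4 ≤ |x| ^ 3 := pow_le_pow_of_le_one (abs_nonneg x) hx (by norm_num)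
    have h5 : |x| ^ 5 ≤ |x| ^ 3 := pow_le_pow_of_le_one (abs_nonneg x) hx (by norm_num)
    calc _ = |(-3 / 4 * x ^ 4 + x ^ 5 / 4)
          + (x - x ^ 2 / 2) ^ 2 * (exp (x - x ^ 2 / 2) - (1 + x))| := by ring_nf
      _ ≤ (3 / 4 * |x| ^ 4 + |x| ^ 5 / 4) + (3 / 2 * |x|) ^ 2 * (2 * |x| ^ 3) := by
        refine (abs_add_le _ _).trans (add_le_add ?_ ?_)
        · refine (abs_add_le _ _).trans_eq ?_
          simp [abs_div, abs_mul, abs_pow]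
        · rw [abs_mul, abs_pow]; gcongr
      _ ≤ 6 * |x| ^ 3 := by nlinarith [pow_nonneg (abs_nonneg x) 3]
  · rw [cubeOrSquare_of_one_lt_abs hx]
    have hb := abs_le.1 (abs_sq_mul_exp_le_four (sub_sq_div_two_le_half x))
    have hx2 := abs_le_sq_of_one_lt_abs hx
    rw [abs_le]
    constructor <;> nlinarith

lemma abs_pow_three_mul_exp_le_cubeOrSquare (x : ℝ) :
    |x - x ^ 2 / 2| ^ 3 * exp (x - x ^ 2 / 2) ≤ 12 * cubeOrSquare x := by
  rcases le_or_gt |x| 1 with hx | hx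
  · rw [cubeOrSquare_of_abs_le hx]
    calc _ ≤ (3 / 2 * |x|) ^ 3 * 2 := by
          gcongr
          · exact abs_sub_sq_div_two_le hx
          · exact exp_le_two_of_le_half (sub_sq_div_two_le_half x)
      _ ≤ 12 * |x| ^ 3 := by nlinarith [pow_nonneg (abs_nonneg x) 3]
  · rw [cubeOrSquare_of_one_lt_abs hx]
    have hb := (le_abs_self _).trans (abs_abs_pow_three_mul_exp_le (sub_sq_div_two_le_half x))
    nlinarith [abs_le_sq_of_one_lt_abs hx]

lemma sq_mul_exp_sub_le_cubeOrSquare (x : ℝ) :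
    ((x - x ^ 2 / 2) * exp (x - x ^ 2 / 2) - x) ^ 2 ≤ 25 * cubeOrSquare x := by
  rcases le_or_gt |x| 1 with hx | hx
  · rw [cubeOrSquare_of_abs_le hx]
    have h := abs_mul_exp_sub_le_cubeOrSquare x
    rw [cubeOrSquare_of_abs_le hx] at h
    have h3 : |x| ^ 3 ≤ |x| ^ 2 := pow_le_pow_of_le_one (abs_nonneg x) hx (by norm_num)
    have h4 : |x| ^ 4 ≤ |x| ^ 3 := pow_le_pow_of_le_one (abs_nonneg x) hx (by norm_num)
    have hd : |(x - x ^ 2 / 2) * exp (x - x ^ 2 / 2) - x| ≤ 9 / 2 * |x| ^ 2 := by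
      have := abs_sub_abs_le_abs_sub ((x - x ^ 2 / 2) * exp (x - x ^ 2 / 2) - x) (x ^ 2 / 2)
      rw [sub_sub, abs_div, abs_pow, abs_two, sq_abs] at *
      linarith [sq_abs x]
    calc _ = |(x - x ^ 2 / 2) * exp (x - x ^ 2 / 2) - x| ^ 2 := (sq_abs _).symm
      _ ≤ (9 / 2 * |x| ^ 2) ^ 2 := by gcongr
      _ ≤ 25 * |x| ^ 3 := by nlinarith [pow_nonneg (abs_nonneg x) 3]
  · rw [cubeOrSquare_of_one_lt_abs hx]
    have hb := abs_mul_exp_le_two (sub_sq_div_two_le_half x)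
    have hd : |(x - x ^ 2 / 2) * exp (x - x ^ 2 / 2) - x| ≤ 3 * |x| := by
      linarith [abs_sub ((x - x ^ 2 / 2) * exp (x - x ^ 2 / 2)) x]
    calc _ = |(x - x ^ 2 / 2) * exp (x - x ^ 2 / 2) - x| ^ 2 := (sq_abs _).symm
      _ ≤ (3 * |x|) ^ 2 := by gcongr
      _ ≤ 25 * x ^ 2 := by nlinarith [sq_abs x]

section

variable {Ω : Type*} {m m₀ : MeasurableSpace Ω} {μ : Measure[m₀] Ω} {f g h : Ω → ℝ}

lemma ae_abs_condExp_sub_condExp_le (hf : Integrable f μ) (hh : Integrable h μ)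
    (hg : Integrable g μ) (hfhg : ∀ ω, |f ω - h ω| ≤ g ω) :
    ∀ᵐ ω ∂μ, |μ[f|m] ω - μ[h|m] ω| ≤ μ[g|m] ω := by
  filter_upwards [condExp_sub hf hh m, abs_condExp_ae_le_condExp_abs (m := m) (μ := μ) (f - h),
    condExp_mono (m := m) (hf.sub hh).abs hg (ae_of_all _ hfhg)] with ω hsub habs hmono
  rw [← Pi.sub_apply, ← hsub]
  exact habs.trans hmono

lemma sq_condExp_ae_le_condExp_sq (hm : m ≤ m₀) [IsFiniteMeasure μ] (hf : MemLp f 2 μ) :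
    ∀ᵐ ω ∂μ, (μ[f|m] ω) ^ 2 ≤ μ[f ^ 2|m] ω := by
  filter_upwards [ProbabilityTheory.condVar_ae_eq_condExp_sq_sub_sq_condExp hm hf,
    condExp_nonneg (m := m) (μ := μ) (f := (f - μ[f|m]) ^ 2) (ae_of_all _ fun ω => sq_nonneg _)]
    with ω hvar hnonneg
  rw [← ProbabilityTheory.condVar, hvar] at hnonneg
  simpa using hnonneg

end

lemma zetaOf_apply {Ω : Type} (lam : ℝ) (ξ : Ω → ℝ) (ω : Ω) :
    zetaOf lam ξ ω = lam * ξ ω - (lam * ξ ω) ^ 2 / 2 := by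
  simp only [zetaOf]; ring

section

variable {Ω : Type} {mG : MeasurableSpace Ω} [mF : MeasurableSpace Ω] {P : Measure Ω}
  {ξ : Ω → ℝ} {lam : ℝ}

lemma integrable_comp_zetaOf [IsFiniteMeasure P] {φ : ℝ → ℝ} {B : ℝ} (hξ : Measurable ξ)
    (hφ : Measurable φ) (hφB : ∀ t ≤ 1 / 2, |φ t| ≤ B) :
    Integrable (fun ω => φ (zetaOf lam ξ ω)) P :=
  .of_bound (hφ.comp (by unfold zetaOf; fun_prop)).aestronglyMeasurable B <| ae_of_all _ fun ω =>
    hφB _ (by rw [zetaOf_apply]; exact sub_sq_div_two_le_half _)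

lemma integrable_cubeOrSquare_comp (hξ : Measurable ξ)
    (hξ2 : Integrable (fun ω => ξ ω ^ 2) P) :
    Integrable (fun ω => cubeOrSquare (lam * ξ ω)) P :=
  (hξ2.const_mul (lam ^ 2)).mono'
    (measurable_cubeOrSquare.comp (hξ.const_mul lam)).aestronglyMeasurable
    (ae_of_all _ fun ω => by
      rw [Real.norm_eq_abs, abs_of_nonneg (cubeOrSquare_nonneg _), ← mul_pow]
      exact cubeOrSquare_le_sq _)

lemma condExp_cubeOrSquare_ae_eq_tildeEps (hξ : Measurable ξ)
    (hξ2 : Integrable (fun ω => ξ ω ^ 2) P) (hlam : 0 < lam) :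
    P[fun ω => cubeOrSquare (lam * ξ ω)|mG] =ᵐ[P] tildeEps mG P lam ξ := by
  set f₁ : Ω → ℝ := fun ω => if 1 < |lam * ξ ω| then ξ ω ^ 2 else 0
  set f₂ : Ω → ℝ := fun ω => if |lam * ξ ω| ≤ 1 then |ξ ω| ^ 3 else 0
  have hsplit : (fun ω => cubeOrSquare (lam * ξ ω)) = lam ^ 2 • f₁ + lam ^ 3 • f₂ := by
    funext ω
    simp only [cubeOrSquare, f₁, f₂, Pi.add_apply, Pi.smul_apply, smul_eq_mul]
    split_ifs <;> simp [abs_mul, abs_of_pos hlam, mul_pow]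
  have hmeas : Measurable fun ω => |lam * ξ ω| := (hξ.const_mul lam).abs
  have hf₁ : Integrable f₁ P :=
    hξ2.mono' (Measurable.ite (measurableSet_lt measurable_const hmeas) (hξ.pow_const 2)
      measurable_const).aestronglyMeasurable (ae_of_all _ fun ω => by
        simp only [f₁]; split_ifs <;> simp [sq_nonneg])
  have hf₂ : Integrable f₂ P :=
    (hξ2.const_mul lam⁻¹).mono' (Measurable.ite (measurableSet_le hmeas measurable_const)
      (hξ.abs.pow_const 3) measurable_const).aestronglyMeasurable (ae_of_all _ fun ω => by
        simp only [f₂]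
        split_ifs with h
        · rw [abs_mul, abs_of_pos hlam, ← le_inv_mul_iff₀ hlam] at h
          rw [Real.norm_eq_abs, abs_of_nonneg (by positivity), ← sq_abs (ξ ω)]
          calc |ξ ω| ^ 3 = |ξ ω| * |ξ ω| ^ 2 := by ring
            _ ≤ lam⁻¹ * |ξ ω| ^ 2 := by gcongr; simpa using h
        · simp only [norm_zero]; positivity)
  rw [hsplit]
  filter_upwards [condExp_add (hf₁.smul (lam ^ 2)) (hf₂.smul (lam ^ 3)) mG,
    condExp_smul (μ := P) (lam ^ 2) f₁ mG, condExp_smul (μ := P) (lam ^ 3) f₂ mG]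
    with ω hadd h₁ h₂
  simp only [hadd, Pi.add_apply, h₁, h₂, Pi.smul_apply, smul_eq_mul, tildeEps, f₁, f₂]

lemma ae_nonneg_tildeEps (hξ : Measurable ξ) (hξ2 : Integrable (fun ω => ξ ω ^ 2) P)
    (hlam : 0 < lam) : ∀ᵐ ω ∂P, 0 ≤ tildeEps mG P lam ξ ω := by
  filter_upwards [condExp_nonneg (m := mG) (ae_of_all P fun ω => cubeOrSquare_nonneg (lam * ξ ω)),
    condExp_cubeOrSquare_ae_eq_tildeEps hξ hξ2 hlam] with ω hnonneg hε
  exact hε ▸ hnonneg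

lemma integrable_of_integrable_sq [IsFiniteMeasure P] (hξ : Measurable ξ)
    (hξ2 : Integrable (fun ω => ξ ω ^ 2) P) :
    Integrable ξ P :=
  ((memLp_two_iff_integrable_sq hξ.aestronglyMeasurable).2 hξ2).integrable one_le_two

lemma integrable_quadratic [IsFiniteMeasure P] (hξ : Measurable ξ)
    (hξ2 : Integrable (fun ω => ξ ω ^ 2) P) (a b c : ℝ) :
    Integrable (fun ω => a + b * ξ ω + c * ξ ω ^ 2) P :=
  ((integrable_const a).add ((integrable_of_integrable_sq hξ hξ2).const_mul b)).add
    (hξ2.const_mul c)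

lemma condExp_quadratic_ae_eq [IsFiniteMeasure P] (hm : mG ≤ mF) (hξ : Measurable ξ)
    (hξ2 : Integrable (fun ω => ξ ω ^ 2) P) (hcond : P[ξ|mG] =ᵐ[P] 0) (a b c : ℝ) :
    P[fun ω => a + b * ξ ω + c * ξ ω ^ 2|mG] =ᵐ[P]
      fun ω => a + c * P[fun ω => ξ ω ^ 2|mG] ω := by
  have hξi := integrable_of_integrable_sq hξ hξ2
  change P[(fun _ => a) + b • ξ + c • (fun ω => ξ ω ^ 2)|mG] =ᵐ[P] _
  filter_upwards [condExp_add ((integrable_const a).add (hξi.smul b)) (hξ2.smul c) mG,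
    condExp_add (integrable_const a) (hξi.smul b) mG, condExp_smul (μ := P) b ξ mG,
    condExp_smul (μ := P) c (fun ω => ξ ω ^ 2) mG, hcond] with ω h h' hb hc h0
  simp [h, h', hb, hc, h0, condExp_const hm]

lemma ae_abs_condExp_comp_zetaOf_sub_le [IsFiniteMeasure P] (hm : mG ≤ mF) (hξ : Measurable ξ)
    (hξ2 : Integrable (fun ω => ξ ω ^ 2) P) (hcond : P[ξ|mG] =ᵐ[P] 0) (hlam : 0 < lam)
    {φ : ℝ → ℝ} {a b c K B : ℝ} (hφ : Measurable φ) (hφB : ∀ t ≤ 1 / 2, |φ t| ≤ B)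
    (hφK : ∀ x, |φ (x - x ^ 2 / 2) - (a + b * x + c * x ^ 2)| ≤ K * cubeOrSquare x) :
    ∀ᵐ ω ∂P, |P[fun ω => φ (zetaOf lam ξ ω)|mG] ω -
      (a + c * lam ^ 2 * P[fun ω => ξ ω ^ 2|mG] ω)| ≤ K * tildeEps mG P lam ξ ω := by
  have hK := (integrable_cubeOrSquare_comp (lam := lam) hξ hξ2).smul K
  have hcmp := ae_abs_condExp_sub_condExp_le (m := mG) (integrable_comp_zetaOf hξ hφ hφB)
    (integrable_quadratic hξ hξ2 a (b * lam) (c * lam ^ 2)) hK fun ω => by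
      have h := hφK (lam * ξ ω)
      rw [← zetaOf_apply] at h
      simpa [mul_assoc, mul_pow] using h
  filter_upwards [hcmp, condExp_quadratic_ae_eq hm hξ hξ2 hcond a (b * lam) (c * lam ^ 2),
    condExp_smul (μ := P) K (fun ω => cubeOrSquare (lam * ξ ω)) mG,
    condExp_cubeOrSquare_ae_eq_tildeEps hξ hξ2 hlam] with ω hcmp hq hK hε
  rwa [hq, hK, Pi.smul_apply, hε, smul_eq_mul] at hcmp

lemma ae_sq_condExp_comp_zetaOf_le [IsFiniteMeasure P] (hm : mG ≤ mF) (hξ : Measurable ξ)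
    (hξ2 : Integrable (fun ω => ξ ω ^ 2) P) (hcond : P[ξ|mG] =ᵐ[P] 0) (hlam : 0 < lam)
    {φ : ℝ → ℝ} {b K B : ℝ} (hφ : Measurable φ) (hφB : ∀ t ≤ 1 / 2, |φ t| ≤ B)
    (hφK : ∀ x, (φ (x - x ^ 2 / 2) - b * x) ^ 2 ≤ K * cubeOrSquare x) :
    ∀ᵐ ω ∂P, (P[fun ω => φ (zetaOf lam ξ ω)|mG] ω) ^ 2 ≤ K * tildeEps mG P lam ξ ω := by
  have hφζ := integrable_comp_zetaOf (P := P) (lam := lam) hξ hφ hφB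
  have hξL2 : MemLp ξ 2 P := (memLp_two_iff_integrable_sq hξ.aestronglyMeasurable).2 hξ2
  have hL2 : MemLp ((fun ω => φ (zetaOf lam ξ ω)) - (b * lam) • ξ) 2 P :=
    (MemLp.of_bound hφζ.aestronglyMeasurable B (ae_of_all _ fun ω =>
      hφB _ (by rw [zetaOf_apply]; exact sub_sq_div_two_le_half _))).sub (hξL2.const_smul _)
  have hcentered : P[(fun ω => φ (zetaOf lam ξ ω)) - (b * lam) • ξ|mG] =ᵐ[P]
      P[fun ω => φ (zetaOf lam ξ ω)|mG] := by
    filter_upwards [condExp_sub hφζ ((integrable_of_integrable_sq hξ hξ2).smul (b * lam)) mG,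
      condExp_smul (μ := P) (b * lam) ξ mG, hcond] with ω hsub hb h0
    simp [hsub, hb, h0]
  have hK := (integrable_cubeOrSquare_comp (lam := lam) hξ hξ2).smul K
  have hmono : P[((fun ω => φ (zetaOf lam ξ ω)) - (b * lam) • ξ) ^ 2|mG] ≤ᵐ[P]
      P[K • fun ω => cubeOrSquare (lam * ξ ω)|mG] :=
    condExp_mono hL2.integrable_sq hK (ae_of_all _ fun ω => by
      have h := hφK (lam * ξ ω)
      rw [← zetaOf_apply] at h
      simpa [mul_assoc] using h)
  filter_upwards [sq_condExp_ae_le_condExp_sq hm hL2, hmono, hcentered,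
    condExp_smul (μ := P) K (fun ω => cubeOrSquare (lam * ξ ω)) mG,
    condExp_cubeOrSquare_ae_eq_tildeEps hξ hξ2 hlam] with ω hjensen hmono hc hK hε
  rw [hc] at hjensen
  rw [hK, Pi.smul_apply, hε, smul_eq_mul] at hmono
  exact hjensen.trans hmono

end

/-- Lemma 3.2: conditional expectations of `e^ζ`, `ζe^ζ`, `ζ²e^ζ`, `|ζ|³e^ζ`
with `ζ = λξ − λ²ξ²/2` are controlled by `ẽ_λ`. -/
theorem condExp_zeta_moments :
    ∃ C : ℝ, 0 < C ∧
      ∀ (Ω : Type) (mG : MeasurableSpace Ω) [mF : MeasurableSpace Ω] (P : Measure Ω),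
        IsProbabilityMeasure P → mG ≤ mF →
          ∀ ξ : Ω → ℝ, Measurable ξ →
            Integrable (fun ω => (ξ ω) ^ 2) P →
            P[ξ|mG] =ᵐ[P] 0 →
            ∀ lam : ℝ, 0 < lam →
              ∀ᵐ ω ∂P,
                |(P[fun ω' => Real.exp (zetaOf lam ξ ω')|mG]) ω - 1| ≤
                    C * tildeEps mG P lam ξ ω ∧
                  |(P[fun ω' => zetaOf lam ξ ω' * Real.exp (zetaOf lam ξ ω')|mG]) ω -
                      lam ^ 2 / 2 * (P[fun ω' => (ξ ω') ^ 2|mG]) ω| ≤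
                    C * tildeEps mG P lam ξ ω ∧
                  |(P[fun ω' => (zetaOf lam ξ ω') ^ 2 * Real.exp (zetaOf lam ξ ω')|mG]) ω -
                      lam ^ 2 * (P[fun ω' => (ξ ω') ^ 2|mG]) ω| ≤
                    C * tildeEps mG P lam ξ ω ∧
                  (P[fun ω' => |zetaOf lam ξ ω'| ^ 3 * Real.exp (zetaOf lam ξ ω')|mG]) ω ≤
                    C * tildeEps mG P lam ξ ω ∧
                  ((P[fun ω' => zetaOf lam ξ ω' * Real.exp (zetaOf lam ξ ω')|mG]) ω) ^ 2 ≤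
                    C * tildeEps mG P lam ξ ω := by
  refine ⟨25, by norm_num, fun Ω mG mF P hP hm ξ hξ hξ2 hcond lam hlam => ?_⟩
  filter_upwards [
    ae_abs_condExp_comp_zetaOf_sub_le hm hξ hξ2 hcond hlam (a := 1) (b := 1) (c := 0)
      measurable_exp (fun t ht => (abs_of_pos (exp_pos t)).trans_le (exp_le_two_of_le_half ht))
      fun x => by simpa using abs_exp_sub_le_cubeOrSquare x,
    ae_abs_condExp_comp_zetaOf_sub_le hm hξ hξ2 hcond hlam (a := 0) (b := 1) (c := 1 / 2)
      (by fun_prop) (fun t => abs_mul_exp_le_two)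
      fun x => by convert abs_mul_exp_sub_le_cubeOrSquare x using 4 <;> ring,
    ae_abs_condExp_comp_zetaOf_sub_le hm hξ hξ2 hcond hlam (a := 0) (b := 0) (c := 1)
      (by fun_prop) (fun t => abs_sq_mul_exp_le_four)
      fun x => by simpa using abs_sq_mul_exp_sub_le_cubeOrSquare x,
    ae_abs_condExp_comp_zetaOf_sub_le hm hξ hξ2 hcond hlam (a := 0) (b := 0) (c := 0)
      (by fun_prop) (fun t => abs_abs_pow_three_mul_exp_le)
      fun x => by simpa using abs_pow_three_mul_exp_le_cubeOrSquare x,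
    ae_sq_condExp_comp_zetaOf_le hm hξ hξ2 hcond hlam (b := 1) (by fun_prop)
      (fun t => abs_mul_exp_le_two) fun x => by simpa using sq_mul_exp_sub_le_cubeOrSquare x,
    ae_nonneg_tildeEps (mG := mG) hξ hξ2 hlam] with ω h₁ h₂ h₃ h₄ h₅ hε
  ring_nf at h₁ h₂ h₃ h₄ h₅ ⊢
  exact ⟨by linarith, by linarith, by linarith, (le_abs_self _).trans (by linarith), by linarith⟩
end

section
/- For each n, let the martingale differences (X_i)_{1≤i≤n} satisfy condition (A1). Then for all x > 0, P( S_n ≥ x √([S]_n) and [S]_n ≥ 16 B_n² ) ≤ (2/3) x^{−2/3} exp{ −(3/4) x² }. -/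
open MeasureTheory Filter
open scoped Topology ENNReal

noncomputable def stdNormalCDF (x : ℝ) : ℝ :=
  (Real.sqrt (2 * Real.pi))⁻¹ * ∫ t in Set.Iic x, Real.exp (-(t ^ 2) / 2)

/-- A finite sequence of square-integrable martingale differences
`X 1, ..., X n` adapted to a filtration `F 0 ⊆ F 1 ⊆ ... ⊆ F n`, with
`F 0` trivial, `E[X i | F (i-1)] = 0` and `0 < E[(X i)^2] < ∞`. -/
structure MDS (Ω : Type) [mΩ : MeasurableSpace Ω] (P : Measure Ω) where
  n : ℕ
  npos : 0 < n
  F : ℕ → MeasurableSpace Ω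
  F_mono : Monotone F
  F_le : ∀ i, F i ≤ mΩ
  F_zero : F 0 = ⊥
  X : ℕ → Ω → ℝ
  meas : ∀ i, 1 ≤ i → i ≤ n → StronglyMeasurable[F i] (X i)
  sq_int : ∀ i, 1 ≤ i → i ≤ n → Integrable (fun ω => (X i ω) ^ 2) P
  mean_zero : ∀ i, 1 ≤ i → i ≤ n → P[X i|F (i - 1)] =ᵐ[P] 0
  var_pos : ∀ i, 1 ≤ i → i ≤ n → 0 < ∫ ω, (X i ω) ^ 2 ∂P

namespace MDS

variable {Ω : Type} [mΩ : MeasurableSpace Ω] {P : Measure Ω}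

/-- `S_n = ∑_{i=1}^n X_i`. -/
noncomputable def S (A : MDS Ω P) : Ω → ℝ := fun ω => ∑ i ∈ Finset.Icc 1 A.n, A.X i ω

/-- `B_n² = ∑_{i=1}^n E[X_i²]`. -/
noncomputable def Bsq (A : MDS Ω P) : ℝ := ∑ i ∈ Finset.Icc 1 A.n, ∫ ω, (A.X i ω) ^ 2 ∂P

/-- `[S]_n = ∑_{i=1}^n X_i²`. -/
noncomputable def QV (A : MDS Ω P) : Ω → ℝ := fun ω => ∑ i ∈ Finset.Icc 1 A.n, (A.X i ω) ^ 2

/-- `⟨S⟩_n = ∑_{i=1}^n E[X_i² | F_{i-1}]`. -/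
noncomputable def CV (A : MDS Ω P) : Ω → ℝ :=
  fun ω => ∑ i ∈ Finset.Icc 1 A.n, (P[fun ω' => (A.X i ω') ^ 2|A.F (i - 1)]) ω

/-- `W_n = S_n / √[S]_n`. -/
noncomputable def W (A : MDS Ω P) : Ω → ℝ := fun ω => A.S ω / Real.sqrt (A.QV ω)

/-- Condition (A1): `|⟨S⟩_n − B_n²| ≤ δ² B_n²` a.s., with `δ ∈ [0, 1/4]`. -/
def CondA1 (A : MDS Ω P) (δ : ℝ) : Prop :=
  0 ≤ δ ∧ δ ≤ 1 / 4 ∧ ∀ᵐ ω ∂P, |A.CV ω - A.Bsq| ≤ δ ^ 2 * A.Bsq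

/-- Condition (A2): `∑_{i=1}^n E[|X_i|^{2+ρ} | F_{i-1}] ≤ ε^ρ B_n^{2+ρ}` a.s.,
with `ε ∈ (0, 1/4]`. -/
def CondA2 (A : MDS Ω P) (ρ ε : ℝ) : Prop :=
  0 < ε ∧ ε ≤ 1 / 4 ∧
    (∀ i, 1 ≤ i → i ≤ A.n → Integrable (fun ω => |A.X i ω| ^ (2 + ρ)) P) ∧
    ∀ᵐ ω ∂P,
      ∑ i ∈ Finset.Icc 1 A.n, (P[fun ω' => |A.X i ω'| ^ (2 + ρ)|A.F (i - 1)]) ω ≤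
        ε ^ ρ * A.Bsq ^ ((2 + ρ) / 2)

/-- Condition (A3): `E[X_i² | F_{i-1}] ≤ κ² B_n²` a.s. for each `i`, with `κ ∈ (0, 1/4]`. -/
def CondA3 (A : MDS Ω P) (κ : ℝ) : Prop :=
  0 < κ ∧ κ ≤ 1 / 4 ∧
    ∀ i, 1 ≤ i → i ≤ A.n →
      ∀ᵐ ω ∂P, (P[fun ω' => (A.X i ω') ^ 2|A.F (i - 1)]) ω ≤ κ ^ 2 * A.Bsq

/-- Condition (A4): `E[|X_i|^{2+ρ} | F_{i-1}] ≤ (γ B_n)^ρ E[X_i² | F_{i-1}]` a.s.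
for each `i`, with `γ ∈ (0, 1/4]`. -/
def CondA4 (A : MDS Ω P) (ρ γ : ℝ) : Prop :=
  0 < γ ∧ γ ≤ 1 / 4 ∧
    (∀ i, 1 ≤ i → i ≤ A.n → Integrable (fun ω => |A.X i ω| ^ (2 + ρ)) P) ∧
    ∀ i, 1 ≤ i → i ≤ A.n →
      ∀ᵐ ω ∂P,
        (P[fun ω' => |A.X i ω'| ^ (2 + ρ)|A.F (i - 1)]) ω ≤
          (γ * Real.sqrt A.Bsq) ^ ρ * (P[fun ω' => (A.X i ω') ^ 2|A.F (i - 1)]) ω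

end MDS

/-!
The process `exp (λ S_m - λ² [S]_m / 10 - 7 λ² ⟨S⟩_m / 10)` has expectation at most `1`: each
increment has conditional expectation at most `1`, by the elementary inequality
`exp (u - u² / 10) ≤ 1 + u + 7 u² / 10` and `1 + y ≤ exp y`. By (A1), `⟨S⟩_n ≤ 17 B_n² / 16`, so
the Chernoff bound with `λ = 2x / √a` shows that `S_n ≥ x √[S]_n` has probability at most
`exp (-(8/5 - 119 B_n² / (40 a)) x²)` on each slice `a ≤ [S]_n ≤ 16 a`. Cover `[S]_n ≥ 16 B_n²` by
the slices `a = 16^(k+1) B_n²`, `k < K = ⌈3x²/10⌉`, and the tail `[S]_n ≥ 16^(K+1) B_n²`, which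
has probability at most `16^(-(K+1))` by Markov's inequality. The sum of these bounds is at most
`(2/3) x^(-2/3) exp (-3x²/4)` by the estimate `t^k exp (-c t) ≤ (k / (c e))^k`.
-/

open Real

lemma exp_sub_sq_div_ten_le (u : ℝ) : exp (u - u ^ 2 / 10) ≤ 1 + u + 7 / 10 * u ^ 2 := by
  set φ : ℝ → ℝ := fun u => (1 + u + 7 / 10 * u ^ 2) * exp (u ^ 2 / 10 - u)
  set φ' : ℝ → ℝ := fun u => u * (7 / 50 * u ^ 2 - 1 / 2 * u + 3 / 5) * exp (u ^ 2 / 10 - u)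
  have hderiv (u : ℝ) : HasDerivAt φ (φ' u) u := by
    have h1 := ((hasDerivAt_id' u).const_add 1).add
      (((hasDerivAt_id' u).pow 2).const_mul (7 / 10))
    have h2 := ((((hasDerivAt_id' u).pow 2).div_const 10).sub (hasDerivAt_id' u)).exp
    exact (h1.mul h2).congr_deriv
      (by simp only [φ', Pi.add_apply, Pi.sub_apply, Pi.pow_apply]; ring)
  have hcont : Continuous φ := by fun_prop
  -- `φ' u` has the sign of `u` (its quadratic factor has negative discriminant), so `φ ≥ φ 0 = 1`.
  have hquad (u : ℝ) : 0 < 7 / 50 * u ^ 2 - 1 / 2 * u + 3 / 5 := by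
    nlinarith [sq_nonneg (u - 25 / 14)]
  have hφ : 1 ≤ φ u := by
    have h0 : φ 0 = 1 := by simp [φ]
    rcases le_total 0 u with hu | hu
    · refine h0 ▸ monotoneOn_of_hasDerivWithinAt_nonneg (convex_Ici 0) hcont.continuousOn
        (fun v _ => (hderiv v).hasDerivWithinAt) (fun v hv => ?_) Set.self_mem_Ici hu hu
      rw [interior_Ici] at hv
      exact mul_nonneg (mul_nonneg hv.out.le (hquad v).le) (exp_pos _).le
    · refine h0 ▸ antitoneOn_of_hasDerivWithinAt_nonpos (convex_Iic 0) hcont.continuousOn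
        (fun v _ => (hderiv v).hasDerivWithinAt) (fun v hv => ?_) hu Set.self_mem_Iic hu
      rw [interior_Iic] at hv
      exact mul_nonpos_of_nonpos_of_nonneg
        (mul_nonpos_of_nonpos_of_nonneg hv.out.le (hquad v).le) (exp_pos _).le
  calc exp (u - u ^ 2 / 10) ≤ exp (u - u ^ 2 / 10) * φ u :=
        le_mul_of_one_le_right (exp_pos _).le hφ
    _ = (1 + u + 7 / 10 * u ^ 2) * exp (u - u ^ 2 / 10 + (u ^ 2 / 10 - u)) := by
      rw [exp_add]; ring
    _ = 1 + u + 7 / 10 * u ^ 2 := by simp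

lemma exp_mul_sub_sq_le (l x : ℝ) : exp (l * x - l ^ 2 / 10 * x ^ 2) ≤ exp (5 / 2) :=
  exp_le_exp.2 (by nlinarith [sq_nonneg (l * x - 5)])

lemma slice_exponent_le {x a b s q c β : ℝ} (hx : 0 ≤ x) (ha : 0 < a) (hb : b ≤ 16 * a)
    (hs : x * √q ≤ s) (hq : a ≤ q) (hq' : q ≤ b) (hc : c ≤ 17 / 16 * β) :
    (8 / 5 - 119 / 40 * (β / a)) * x ^ 2 ≤
      2 * x / √a * s - (2 * x / √a) ^ 2 / 10 * q - 7 / 10 * (2 * x / √a) ^ 2 * c := by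
  set r := √a
  set l := 2 * x / r
  have hr : 0 < r := sqrt_pos.2 ha
  have hr2 : r ^ 2 = a := sq_sqrt ha.le
  have hl : 0 ≤ l := by positivity
  have hl2 : l ^ 2 = 4 * x ^ 2 / a := by rw [div_pow, hr2]; ring
  have hv : r ≤ √q := sqrt_le_sqrt hq
  have hv' : √q ≤ 4 * r := by
    rw [show 4 * r = √(16 * a) by rw [sqrt_mul (by norm_num), show (16 : ℝ) = 4 ^ 2 by norm_num,
      sqrt_sq (by norm_num)]]
    exact sqrt_le_sqrt (hq'.trans hb)
  -- `w = l √q` lies in `[2x, 8x]`, where `x w - w² / 10 ≥ 8/5 x²`.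
  set w := l * √q
  have hlr : l * r = 2 * x := div_mul_cancel₀ _ hr.ne'
  have hw : 2 * x ≤ w := hlr ▸ mul_le_mul_of_nonneg_left hv hl
  have hw' : w ≤ 8 * x := by nlinarith [mul_le_mul_of_nonneg_left hv' hl]
  have hsq : l ^ 2 * q = w ^ 2 := by rw [mul_pow, sq_sqrt (ha.le.trans hq)]
  have hls : x * w ≤ l * s := by nlinarith [mul_le_mul_of_nonneg_left hs hl]
  have hlc : l ^ 2 * c ≤ 4 * x ^ 2 / a * (17 / 16 * β) :=
    hl2 ▸ mul_le_mul_of_nonneg_left hc (sq_nonneg l)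
  have hβ : 119 / 40 * (β / a) * x ^ 2 = 7 / 10 * (4 * x ^ 2 / a * (17 / 16 * β)) := by ring
  nlinarith [mul_nonneg (sub_nonneg.2 hw) (sub_nonneg.2 hw')]

lemma pow_mul_exp_neg_le (n : ℕ) {c t : ℝ} (hc : 0 < c) (ht : 0 ≤ t) :
    t ^ n * exp (-(c * t)) ≤ (n * exp (-1) / c) ^ n := by
  rcases n.eq_zero_or_pos with rfl | hn
  · simpa using mul_nonneg hc.le ht
  have hn' : (0 : ℝ) < n := Nat.cast_pos.2 hn
  have hbase : t * exp (-(c / n * t)) ≤ n * exp (-1) / c := by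
    have := mul_exp_neg_le_exp_neg_one (c / n * t)
    rw [le_div_iff₀ hc]
    calc t * exp (-(c / n * t)) * c = n * (c / n * t * exp (-(c / n * t))) := by
          field_simp
      _ ≤ n * exp (-1) := mul_le_mul_of_nonneg_left this hn'.le
  calc t ^ n * exp (-(c * t)) = (t * exp (-(c / n * t))) ^ n := by
        rw [mul_pow, ← exp_nat_mul]; congr 2; field_simp
    _ ≤ _ := pow_le_pow_left₀ (by positivity) hbase n

lemma pow_mul_exp_neg_cube_le (k : ℕ) {c g M : ℝ} (hc : 0 < c) (hg : 0 ≤ g) (hM : 0 ≤ M)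
    (h : (k * exp (-1) / (3 * c)) ^ k ≤ M ^ 3) : g ^ k * exp (-(c * g ^ 3)) ≤ M := by
  refine le_of_pow_le_pow_left₀ three_ne_zero hM ?_
  calc (g ^ k * exp (-(c * g ^ 3))) ^ 3 = (g ^ 3) ^ k * exp (-(3 * c * g ^ 3)) := by
        rw [mul_pow, ← pow_mul, ← pow_mul, mul_comm k 3, ← exp_nat_mul]; ring_nf
    _ ≤ M ^ 3 := (pow_mul_exp_neg_le k (by positivity) (by positivity)).trans h

lemma exp_mul_le_sixteen_pow_ceil (T : ℝ) : exp (83 / 100 * T) ≤ 16 ^ ⌈3 / 10 * T⌉₊ := by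
  rw [← exp_log (by norm_num : (0 : ℝ) < 16), ← exp_nat_mul, exp_le_exp,
    show (16 : ℝ) = 2 ^ 4 by norm_num, log_pow]
  have hlog := log_two_gt_d9
  rcases le_total T 0 with hT | hT
  · nlinarith [(Nat.cast_nonneg ⌈3 / 10 * T⌉₊ : (0 : ℝ) ≤ _)]
  · nlinarith [Nat.le_ceil (3 / 10 * T)]

lemma one_div_sixteen_pow_ceil_mul_le {g : ℝ} (hg : 0 < g) :
    1 / 16 ^ (⌈3 / 10 * g ^ 3⌉₊ + 1) * (g * exp (3 / 4 * g ^ 3)) ≤ 3 / 40 := by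
  have hg' : g * exp (-(2 / 25 * g ^ 3)) ≤ 6 / 5 := by
    simpa using pow_mul_exp_neg_cube_le 1 (c := 2 / 25) (by norm_num) hg.le (by norm_num)
      (by norm_num; linarith [exp_neg_one_lt_d9])
  rw [show g * exp (3 / 4 * g ^ 3) = g * exp (-(2 / 25 * g ^ 3)) * exp (83 / 100 * g ^ 3) by
    rw [mul_assoc, ← exp_add]; ring_nf, div_mul_eq_mul_div, one_mul,
    div_le_iff₀ (by positivity), pow_succ]
  calc g * exp (-(2 / 25 * g ^ 3)) * exp (83 / 100 * g ^ 3) ≤ 6 / 5 * 16 ^ ⌈3 / 10 * g ^ 3⌉₊ :=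
        mul_le_mul hg' (exp_mul_le_sixteen_pow_ceil _) (exp_pos _).le (by norm_num)
    _ = 3 / 40 * (16 ^ ⌈3 / 10 * g ^ 3⌉₊ * 16) := by ring

lemma sum_slice_exponents_le {T : ℝ} (hT : 0 ≤ T) {K : ℕ} (hK : 1 ≤ K) :
    ∑ k ∈ Finset.range K, exp (-((8 / 5 - 119 / 40 / 16 ^ (k + 1)) * T)) ≤
      exp (-(905 / 640 * T)) + (K - 1) * exp (-(397 / 250 * T)) := by
  obtain ⟨m, rfl⟩ : ∃ m, K = m + 1 := ⟨K - 1, by omega⟩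
  have hterm : ∀ k ∈ Finset.range m,
      exp (-((8 / 5 - 119 / 40 / 16 ^ (k + 1 + 1)) * T)) ≤ exp (-(397 / 250 * T)) := by
    intro k _
    have h16 : (16 : ℝ) ^ 2 ≤ 16 ^ (k + 1 + 1) := pow_le_pow_right₀ (by norm_num) (by omega)
    have : 119 / 40 / (16 : ℝ) ^ (k + 1 + 1) ≤ 119 / 40 / 16 ^ 2 :=
      div_le_div_of_nonneg_left (by norm_num) (by norm_num) h16
    rw [exp_le_exp]
    nlinarith
  have hsum := Finset.sum_le_sum hterm
  rw [Finset.sum_const, Finset.card_range, nsmul_eq_mul] at hsum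
  rw [Finset.sum_range_succ']
  norm_num
  linarith

lemma sum_slice_tail_bounds_le {g : ℝ} (hg : 0 < g) :
    exp (-(905 / 640 * g ^ 3)) + ((⌈3 / 10 * g ^ 3⌉₊ : ℝ) - 1) * exp (-(397 / 250 * g ^ 3)) +
        1 / 16 ^ (⌈3 / 10 * g ^ 3⌉₊ + 1) ≤
      2 / 3 * g⁻¹ * exp (-(3 / 4) * g ^ 3) := by
  have hC := one_div_sixteen_pow_ceil_mul_le hg
  set T := g ^ 3
  set K := ⌈3 / 10 * T⌉₊
  have he := exp_neg_one_lt_d9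
  suffices h : (exp (-(905 / 640 * T)) + (K - 1) * exp (-(397 / 250 * T)) + 1 / 16 ^ (K + 1)) *
      (g * exp (3 / 4 * T)) ≤ 2 / 3 by
    rwa [show 2 / 3 * g⁻¹ * exp (-(3 / 4) * T) = 2 / 3 / (g * exp (3 / 4 * T)) by
      rw [neg_mul, exp_neg]; field_simp, le_div_iff₀ (by positivity)]
  have hAeq : exp (-(905 / 640 * T)) * (g * exp (3 / 4 * T)) = g * exp (-(85 / 128 * T)) := by
    rw [mul_left_comm, ← exp_add]; ring_nf
  have hBeq : exp (-(397 / 250 * T)) * (g * exp (3 / 4 * T)) = g * exp (-(419 / 500 * T)) := by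
    rw [mul_left_comm, ← exp_add]; ring_nf
  rw [add_mul, add_mul, hAeq, mul_assoc, hBeq]
  rcases le_or_gt T (10 / 3) with hT | hT
  · have hA : g * exp (-(85 / 128 * T)) ≤ 57 / 100 := by
      simpa using pow_mul_exp_neg_cube_le 1 (c := 85 / 128) (by norm_num) hg.le (by norm_num)
        (by norm_num; linarith)
    have hK : K = 1 := le_antisymm (Nat.ceil_le.2 (by norm_num; linarith))
      (Nat.one_le_iff_ne_zero.2 (Nat.ceil_pos.2 (by positivity)).ne')
    rw [hK, Nat.cast_one, sub_self, zero_mul, add_zero]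
    rw [hK] at hC
    linarith
  · -- For `T ≥ 10/3` both `g` and `(K - 1) g` are at most `3/10 · g⁴ = 3/10 · T g`.
    have hK : ((K : ℝ) - 1) * (g * exp (-(419 / 500 * T))) ≤
        3 / 10 * (g ^ 4 * exp (-(419 / 500 * T))) := by
      have : (K : ℝ) - 1 ≤ 3 / 10 * T := by
        linarith [Nat.ceil_lt_add_one (by positivity : (0 : ℝ) ≤ 3 / 10 * T)]
      calc ((K : ℝ) - 1) * (g * exp (-(419 / 500 * T)))
          ≤ 3 / 10 * T * (g * exp (-(419 / 500 * T))) :=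
            mul_le_mul_of_nonneg_right this (by positivity)
        _ = _ := by ring
    have hA : g * exp (-(85 / 128 * T)) ≤ 3 / 10 * (g ^ 4 * exp (-(85 / 128 * T))) := by
      have : 0 ≤ g * exp (-(85 / 128 * T)) * (3 / 10 * T - 1) :=
        mul_nonneg (by positivity) (by linarith)
      linarith [show g ^ 4 = T * g by ring]
    have hA' : g ^ 4 * exp (-(85 / 128 * T)) ≤ 7 / 10 :=
      pow_mul_exp_neg_cube_le 4 (by norm_num) hg.le (by norm_num) (by
        push_cast
        refine (pow_le_pow_left₀ (by positivity) (?_ : _ ≤ (3 / 4 : ℝ)) 4).trans (by norm_num)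
        rw [div_le_iff₀ (by norm_num)]; linarith)
    have hB : g ^ 4 * exp (-(419 / 500 * T)) ≤ 1 / 2 :=
      pow_mul_exp_neg_cube_le 4 (by norm_num) hg.le (by norm_num) (by
        push_cast
        refine (pow_le_pow_left₀ (by positivity) (?_ : _ ≤ (59 / 100 : ℝ)) 4).trans (by norm_num)
        rw [div_le_iff₀ (by norm_num)]; linarith)
    linarith

lemma integrable_exp_mul_sub_sq {Ω : Type*} [MeasurableSpace Ω] {P : Measure Ω}
    [IsFiniteMeasure P] {X : Ω → ℝ} (hX : AEStronglyMeasurable X P) (l : ℝ) :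
    Integrable (fun ω => exp (l * X ω - l ^ 2 / 10 * X ω ^ 2)) P :=
  Integrable.mono' (integrable_const (exp (5 / 2)))
    (continuous_exp.comp_aestronglyMeasurable ((hX.const_mul l).sub ((hX.pow 2).const_mul _)))
    (Eventually.of_forall fun ω => by
      rw [norm_of_nonneg (exp_pos _).le]; exact exp_mul_sub_sq_le l (X ω))

lemma condExp_exp_sub_sq_le {Ω : Type*} {m mΩ : MeasurableSpace Ω} {P : Measure Ω}
    [IsFiniteMeasure P] (hm : m ≤ mΩ) {X : Ω → ℝ} (hX : AEStronglyMeasurable X P)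
    (hX2 : Integrable (fun ω => X ω ^ 2) P) (hmean : P[X|m] =ᵐ[P] 0) (l : ℝ) :
    P[fun ω => exp (l * X ω - l ^ 2 / 10 * X ω ^ 2)|m] ≤ᵐ[P]
      fun ω => 1 + 7 / 10 * l ^ 2 * P[fun ω => X ω ^ 2|m] ω := by
  have hX1 : Integrable X P := ((memLp_two_iff_integrable_sq hX).2 hX2).integrable one_le_two
  have hlin_int : Integrable (fun ω => l * X ω) P := hX1.const_mul l
  have hsq_int : Integrable (fun ω => 7 / 10 * l ^ 2 * X ω ^ 2) P := hX2.const_mul _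
  have hmono : P[fun ω => exp (l * X ω - l ^ 2 / 10 * X ω ^ 2)|m] ≤ᵐ[P]
      P[(fun _ => (1 : ℝ)) + (fun ω => l * X ω) + fun ω => 7 / 10 * l ^ 2 * X ω ^ 2|m] :=
    condExp_mono (integrable_exp_mul_sub_sq hX l) (((integrable_const 1).add hlin_int).add hsq_int)
      (Eventually.of_forall fun ω => by
        change _ ≤ 1 + l * X ω + 7 / 10 * l ^ 2 * X ω ^ 2
        convert exp_sub_sq_div_ten_le (l * X ω) using 2 <;> ring)
  have hlin : P[fun ω => l * X ω|m] =ᵐ[P] 0 := by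
    filter_upwards [condExp_smul (m := m) (μ := P) l X, hmean] with ω h h0
    change P[l • X|m] ω = 0
    simp [h, h0]
  have hsq : P[fun ω => 7 / 10 * l ^ 2 * X ω ^ 2|m] =ᵐ[P]
      fun ω => 7 / 10 * l ^ 2 * P[fun ω => X ω ^ 2|m] ω :=
    condExp_smul (m := m) (μ := P) (7 / 10 * l ^ 2) (fun ω => X ω ^ 2)
  filter_upwards [hmono, condExp_add ((integrable_const 1).add hlin_int) hsq_int m,
    condExp_add (integrable_const 1) hlin_int m, hlin, hsq] with ω h1 h2 h3 h4 h5
  simp only [Pi.add_apply] at h1 h2 h3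
  rw [h2, h3, h4, h5, condExp_const hm] at h1
  simpa using h1

open ProbabilityTheory in
lemma measureReal_le_exp_neg_of_integral_exp_le_one {Ω : Type*} [MeasurableSpace Ω]
    {P : Measure Ω} [IsFiniteMeasure P] {Y : Ω → ℝ} (hint : Integrable (fun ω => exp (Y ω)) P)
    (hle : ∫ ω, exp (Y ω) ∂P ≤ 1) {s : Set Ω} {c : ℝ} (hs : ∀ᵐ ω ∂P, ω ∈ s → c ≤ Y ω) :
    P.real s ≤ exp (-c) :=
  calc P.real s ≤ P.real {ω | c ≤ Y ω} :=
        ENNReal.toReal_mono (measure_ne_top _ _) (measure_mono_ae (hs.mono fun _ h hω => h hω))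
    _ ≤ exp (-1 * c) * mgf Y P 1 := measure_ge_le_exp_mul_mgf c zero_le_one (by simpa using hint)
    _ ≤ exp (-c) := by
        simpa [mgf] using mul_le_of_le_one_right (exp_pos (-c)).le hle

lemma setOf_subset_slices_union {α : Type*} (p : α → Prop) (f : α → ℝ) (t : ℕ → ℝ) (K : ℕ) :
    {ω | p ω ∧ t 0 ≤ f ω} ⊆
      (⋃ k ∈ Finset.range K, {ω | p ω ∧ t k ≤ f ω ∧ f ω ≤ t (k + 1)}) ∪ {ω | t K ≤ f ω} := by
  induction K with
  | zero => exact fun ω hω => Or.inr hω.2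
  | succ K ih =>
    intro ω hω
    rcases ih hω with hslice | htail
    · simp only [Set.mem_iUnion, Finset.mem_range] at hslice
      obtain ⟨k, hk, hωk⟩ := hslice
      exact Or.inl (Set.mem_biUnion (Finset.mem_range.2 (by omega)) hωk)
    · rcases le_total (f ω) (t (K + 1)) with hle | hlt
      · exact Or.inl (Set.mem_biUnion (Finset.mem_range.2 K.lt_succ_self) ⟨hω.1, htail, hle⟩)
      · exact Or.inr hlt

namespace MDS

variable {Ω : Type} [MeasurableSpace Ω] {P : Measure Ω} (A : MDS Ω P)

lemma Bsq_pos : 0 < A.Bsq :=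
  Finset.sum_pos (fun i hi => A.var_pos i (Finset.mem_Icc.1 hi).1 (Finset.mem_Icc.1 hi).2)
    ⟨1, Finset.mem_Icc.2 ⟨le_rfl, A.npos⟩⟩

lemma integral_QV : ∫ ω, A.QV ω ∂P = A.Bsq :=
  integral_finsetSum _ fun i hi => A.sq_int i (Finset.mem_Icc.1 hi).1 (Finset.mem_Icc.1 hi).2

lemma measureReal_le_QV_le {c : ℝ} (hc : 0 < c) : P.real {ω | c ≤ A.QV ω} ≤ A.Bsq / c := by
  rw [le_div_iff₀ hc, mul_comm, ← A.integral_QV]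
  exact mul_meas_ge_le_integral_of_nonneg
    (Eventually.of_forall fun ω => Finset.sum_nonneg fun i _ => sq_nonneg (A.X i ω))
    (integrable_finsetSum _ fun i hi =>
      A.sq_int i (Finset.mem_Icc.1 hi).1 (Finset.mem_Icc.1 hi).2) c

lemma CondA1.ae_CV_le {δ : ℝ} (hA : A.CondA1 δ) : ∀ᵐ ω ∂P, A.CV ω ≤ 17 / 16 * A.Bsq := by
  obtain ⟨hδ0, hδ1, hae⟩ := hA
  filter_upwards [hae] with ω hω
  have hδ2 : δ ^ 2 ≤ 1 / 16 := by nlinarith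
  nlinarith [(abs_le.1 hω).2, A.Bsq_pos]

lemma aestronglyMeasurable_X {i : ℕ} (h1 : 1 ≤ i) (hi : i ≤ A.n) :
    AEStronglyMeasurable (A.X i) P :=
  ((A.meas i h1 hi).mono (A.F_le i)).aestronglyMeasurable

-- A product, so that the `F (i - 1)`-measurable second factor can be pulled out of
-- `P[· | F (i - 1)]`.
noncomputable def expIncrement (l : ℝ) (i : ℕ) : Ω → ℝ :=
  (fun ω => exp (l * A.X i ω - l ^ 2 / 10 * A.X i ω ^ 2)) *
    fun ω => exp (-(7 / 10 * l ^ 2 * P[fun ω' => A.X i ω' ^ 2|A.F (i - 1)] ω))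

noncomputable def expProcess (l : ℝ) (m : ℕ) (ω : Ω) : ℝ :=
  ∏ i ∈ Finset.Icc 1 m, A.expIncrement l i ω

variable (l : ℝ)

lemma expProcess_zero : A.expProcess l 0 = 1 := by
  funext ω; simp [expProcess]

lemma expProcess_succ (m : ℕ) :
    A.expProcess l (m + 1) = A.expProcess l m * A.expIncrement l (m + 1) := by
  funext ω; simp only [expProcess, Pi.mul_apply, Finset.prod_Icc_succ_top (Nat.le_add_left 1 m)]

lemma expProcess_n (ω : Ω) :
    A.expProcess l A.n ω = exp (l * A.S ω - l ^ 2 / 10 * A.QV ω - 7 / 10 * l ^ 2 * A.CV ω) := by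
  simp only [expProcess, expIncrement, Pi.mul_apply, ← exp_add, ← exp_sum, S, QV, CV,
    Finset.mul_sum, sub_eq_add_neg, ← Finset.sum_neg_distrib, ← Finset.sum_add_distrib]

lemma stronglyMeasurable_exp_neg_condExp_sq (i : ℕ) :
    StronglyMeasurable[A.F (i - 1)]
      fun ω => exp (-(7 / 10 * l ^ 2 * P[fun ω' => A.X i ω' ^ 2|A.F (i - 1)] ω)) :=
  continuous_exp.comp_stronglyMeasurable (stronglyMeasurable_condExp.const_mul _).neg

lemma ae_norm_exp_neg_condExp_sq_le_one (i : ℕ) :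
    ∀ᵐ ω ∂P, ‖exp (-(7 / 10 * l ^ 2 * P[fun ω' => A.X i ω' ^ 2|A.F (i - 1)] ω))‖ ≤ 1 := by
  filter_upwards [condExp_nonneg (m := A.F (i - 1)) (μ := P)
    (Eventually.of_forall fun ω => sq_nonneg (A.X i ω))] with ω hω
  rw [norm_of_nonneg (exp_pos _).le, exp_le_one_iff, neg_nonpos]
  exact mul_nonneg (by positivity) hω

lemma stronglyMeasurable_expIncrement {i : ℕ} (h1 : 1 ≤ i) (hi : i ≤ A.n) :
    StronglyMeasurable[A.F i] (A.expIncrement l i) := by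
  have hX := A.meas i h1 hi
  refine (continuous_exp.comp_stronglyMeasurable ((hX.const_mul l).sub
    ((hX.pow 2).const_mul _))).mul ?_
  exact (A.stronglyMeasurable_exp_neg_condExp_sq l i).mono (A.F_mono (Nat.sub_le i 1))

lemma ae_norm_expIncrement_le (i : ℕ) : ∀ᵐ ω ∂P, ‖A.expIncrement l i ω‖ ≤ exp (5 / 2) := by
  filter_upwards [A.ae_norm_exp_neg_condExp_sq_le_one l i] with ω hω
  rw [expIncrement, Pi.mul_apply, norm_mul, ← mul_one (exp (5 / 2)), norm_of_nonneg (exp_pos _).le]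
  exact mul_le_mul (exp_mul_sub_sq_le _ _) hω (norm_nonneg _) (exp_pos _).le

lemma stronglyMeasurable_expProcess {m : ℕ} (hm : m ≤ A.n) :
    StronglyMeasurable[A.F m] (A.expProcess l m) := by
  induction m with
  | zero => rw [expProcess_zero]; exact stronglyMeasurable_const
  | succ m ih =>
    rw [expProcess_succ]
    exact ((ih (by omega)).mono (A.F_mono m.le_succ)).mul
      (A.stronglyMeasurable_expIncrement l (Nat.le_add_left 1 m) hm)

variable [IsFiniteMeasure P]

lemma integrable_expIncrement {i : ℕ} (h1 : 1 ≤ i) (hi : i ≤ A.n) :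
    Integrable (A.expIncrement l i) P :=
  (integrable_exp_mul_sub_sq (A.aestronglyMeasurable_X h1 hi) l).mul_bdd
    ((A.stronglyMeasurable_exp_neg_condExp_sq l i).mono (A.F_le _)).aestronglyMeasurable
    (A.ae_norm_exp_neg_condExp_sq_le_one l i)

lemma condExp_expIncrement_le_one {m : ℕ} (hm : m + 1 ≤ A.n) :
    P[A.expIncrement l (m + 1)|A.F m] ≤ᵐ[P] 1 := by
  have h1 : 1 ≤ m + 1 := Nat.le_add_left 1 m
  have hpull := condExp_mul_of_stronglyMeasurable_right (m := A.F m)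
    (A.stronglyMeasurable_exp_neg_condExp_sq l (m + 1)) (A.integrable_expIncrement l h1 hm)
    (integrable_exp_mul_sub_sq (A.aestronglyMeasurable_X h1 hm) l)
  filter_upwards [hpull, condExp_exp_sub_sq_le (A.F_le m) (A.aestronglyMeasurable_X h1 hm)
    (A.sq_int _ h1 hm) (A.mean_zero _ h1 hm) l] with ω hω hle
  set V := P[fun ω' => A.X (m + 1) ω' ^ 2|A.F m] ω
  calc P[A.expIncrement l (m + 1)|A.F m] ω
      ≤ (1 + 7 / 10 * l ^ 2 * V) * exp (-(7 / 10 * l ^ 2 * V)) := by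
        rw [expIncrement, hω, Pi.mul_apply]
        exact mul_le_mul_of_nonneg_right hle (exp_pos _).le
    _ ≤ exp (7 / 10 * l ^ 2 * V) * exp (-(7 / 10 * l ^ 2 * V)) :=
        mul_le_mul_of_nonneg_right (by linarith [add_one_le_exp (7 / 10 * l ^ 2 * V)])
          (exp_pos _).le
    _ = 1 := by rw [← exp_add, add_neg_cancel, exp_zero]

lemma integrable_expProcess {m : ℕ} (hm : m ≤ A.n) : Integrable (A.expProcess l m) P := by
  induction m with
  | zero => rw [expProcess_zero]; exact integrable_const 1
  | succ m ih =>
    rw [expProcess_succ]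
    exact (ih (by omega)).mul_bdd (A.integrable_expIncrement l (Nat.le_add_left 1 m) hm).1
      (A.ae_norm_expIncrement_le l (m + 1))

lemma integral_expProcess_le_one [IsProbabilityMeasure P] {m : ℕ} (hm : m ≤ A.n) :
    ∫ ω, A.expProcess l m ω ∂P ≤ 1 := by
  induction m with
  | zero => simp [expProcess_zero]
  | succ m ih =>
    have hm' : m ≤ A.n := by omega
    have hpull := condExp_mul_of_stronglyMeasurable_left (m := A.F m)
      (A.stronglyMeasurable_expProcess l hm') (A.expProcess_succ l m ▸ A.integrable_expProcess l hm)
      (A.integrable_expIncrement l (Nat.le_add_left 1 m) hm)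
    calc ∫ ω, A.expProcess l (m + 1) ω ∂P
        = ∫ ω, P[A.expProcess l m * A.expIncrement l (m + 1)|A.F m] ω ∂P := by
          rw [integral_condExp (A.F_le m), expProcess_succ]
      _ ≤ ∫ ω, A.expProcess l m ω ∂P := by
          refine integral_mono_ae integrable_condExp (A.integrable_expProcess l hm') ?_
          filter_upwards [hpull, A.condExp_expIncrement_le_one l hm] with ω hω hle
          rw [hω, Pi.mul_apply]
          exact mul_le_of_le_one_right
            (Finset.prod_nonneg fun i _ => (mul_pos (exp_pos _) (exp_pos _)).le) hle
      _ ≤ 1 := ih hm'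

variable [IsProbabilityMeasure P]

lemma measureReal_slice_le {δ : ℝ} (hA : A.CondA1 δ) {x a b : ℝ} (hx : 0 ≤ x) (ha : 0 < a)
    (hb : b ≤ 16 * a) :
    P.real {ω | x * √(A.QV ω) ≤ A.S ω ∧ a ≤ A.QV ω ∧ A.QV ω ≤ b} ≤
      exp (-((8 / 5 - 119 / 40 * (A.Bsq / a)) * x ^ 2)) := by
  set l := 2 * x / √a
  have hZ : A.expProcess l A.n =
      fun ω => exp (l * A.S ω - l ^ 2 / 10 * A.QV ω - 7 / 10 * l ^ 2 * A.CV ω) :=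
    funext (A.expProcess_n l)
  refine measureReal_le_exp_neg_of_integral_exp_le_one
    (hZ ▸ A.integrable_expProcess l le_rfl) (hZ ▸ A.integral_expProcess_le_one l le_rfl) ?_
  filter_upwards [hA.ae_CV_le] with ω hCV ⟨hS, hQ, hQ'⟩
  exact slice_exponent_le hx ha hb hS hQ hQ' hCV

lemma measureReal_le_sum_slices {δ : ℝ} (hA : A.CondA1 δ) {x : ℝ} (hx : 0 ≤ x) (K : ℕ) :
    P.real {ω | x * √(A.QV ω) ≤ A.S ω ∧ 16 * A.Bsq ≤ A.QV ω} ≤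
      ∑ k ∈ Finset.range K, exp (-((8 / 5 - 119 / 40 / 16 ^ (k + 1)) * x ^ 2)) +
        1 / 16 ^ (K + 1) := by
  set t : ℕ → ℝ := fun k => 16 ^ (k + 1) * A.Bsq
  have ht (k : ℕ) : 0 < t k := mul_pos (by positivity) A.Bsq_pos
  have hBt (k : ℕ) : A.Bsq / t k = 1 / 16 ^ (k + 1) := by
    rw [div_mul_cancel_right₀ A.Bsq_pos.ne', one_div]
  have hsub := setOf_subset_slices_union (fun ω => x * √(A.QV ω) ≤ A.S ω) A.QV t K
  rw [show t 0 = 16 * A.Bsq by simp [t]] at hsub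
  calc P.real {ω | x * √(A.QV ω) ≤ A.S ω ∧ 16 * A.Bsq ≤ A.QV ω}
      ≤ ∑ k ∈ Finset.range K,
          P.real {ω | x * √(A.QV ω) ≤ A.S ω ∧ t k ≤ A.QV ω ∧ A.QV ω ≤ t (k + 1)} +
        P.real {ω | t K ≤ A.QV ω} :=
        (measureReal_mono hsub).trans ((measureReal_union_le _ _).trans
          (add_le_add_left (measureReal_biUnion_finset_le _ _) _))
    _ ≤ _ := by
        gcongr with k
        · have hslice := A.measureReal_slice_le hA hx (ht k) (b := t (k + 1))
            (le_of_eq (by simp only [t]; ring))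
          rwa [hBt, mul_one_div] at hslice
        · exact (A.measureReal_le_QV_le (ht K)).trans_eq (hBt K)

end MDS

/-- Lemma 3.8: under condition (A1), for all `x > 0`,
`P(S_n ≥ x √[S]_n, [S]_n ≥ 16 B_n²) ≤ (2/3) x^{-2/3} exp(-(3/4) x²)`. -/
theorem exponential_bound_large_quadratic_variation :
    ∀ (Ω : Type) [MeasurableSpace Ω] (P : Measure Ω), IsProbabilityMeasure P →
      ∀ (A : MDS Ω P) (δ : ℝ), A.CondA1 δ →
        ∀ x : ℝ, 0 < x →
          (P {ω | x * Real.sqrt (A.QV ω) ≤ A.S ω ∧ 16 * A.Bsq ≤ A.QV ω}).toReal ≤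
            2 / 3 * x ^ (-(2 : ℝ) / 3) * Real.exp (-(3 / 4) * x ^ 2) := by
  intro Ω _ P _ A δ hA x hx
  set g := x ^ ((2 : ℝ) / 3)
  have hg3 : g ^ 3 = x ^ 2 := by rw [← rpow_natCast, ← rpow_mul hx.le]; norm_num
  have hslices := A.measureReal_le_sum_slices hA hx.le ⌈3 / 10 * x ^ 2⌉₊
  have htail := hg3 ▸ sum_slice_tail_bounds_le (rpow_pos_of_pos hx (2 / 3))
  set K := ⌈3 / 10 * x ^ 2⌉₊
  have hK : 1 ≤ K := Nat.one_le_iff_ne_zero.2 (Nat.ceil_pos.2 (by positivity)).ne'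
  calc P.real {ω | x * √(A.QV ω) ≤ A.S ω ∧ 16 * A.Bsq ≤ A.QV ω}
      ≤ ∑ k ∈ Finset.range K, exp (-((8 / 5 - 119 / 40 / 16 ^ (k + 1)) * x ^ 2)) +
          1 / 16 ^ (K + 1) := hslices
    _ ≤ exp (-(905 / 640 * x ^ 2)) + (K - 1) * exp (-(397 / 250 * x ^ 2)) + 1 / 16 ^ (K + 1) := by
        gcongr; exact sum_slice_exponents_le (sq_nonneg x) hK
    _ ≤ 2 / 3 * g⁻¹ * exp (-(3 / 4) * x ^ 2) := htail
    _ = 2 / 3 * x ^ (-(2 : ℝ) / 3) * exp (-(3 / 4) * x ^ 2) := by rw [neg_div, rpow_neg hx.le]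
end
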